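/- Let H be a functional Hilbert space of holomorphic functions on the open unit disc such that the operator M_z of multiplication by z is left invertible and cyclic. Let f ∈ H. If M_z + f⊗1 is analytic and f(0) ≠ 0, then σ_l(M_z + f⊗1) = σ_l(M_z) and r(M_z + f⊗1) = r(M_z). -/

import Mathlib

open scoped InnerProductSpace

/-- The rank one operator `f ⊗ g` given by `(f ⊗ g) h = ⟨h, g⟩ f`, where the inner
product is linear in the first argument (i.e. `⟪g, h⟫_ℂ • f` in Mathlib's convention). -/
noncomputable def rankOne {H : Type*} [NormedAddCommGroup H] [InnerProductSpace ℂ H]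
    (f g : H) : H →L[ℂ] H := (innerSL ℂ g).smulRight f

/-- The `n`-th Taylor coefficient at `0` of a function `φ : ℂ → ℂ`. -/
noncomputable def taylorCoeff (φ : ℂ → ℂ) (n : ℕ) : ℂ :=
  iteratedDeriv n φ 0 / (n.factorial : ℂ)

/-- A realization of a complex Hilbert space `H` as a *functional Hilbert space* of
holomorphic functions on the open unit disc `𝔻`:  elements of `H` are identified
(injectively and linearly) with holomorphic functions on `𝔻`; `h ∈ H` iff `z·h ∈ H`;
the multiplication operator `M_z` is a bounded operator on `H`; the constant function
`1` belongs to `H` and `⟨h, 1⟩ = h(0)` for all `h ∈ H` (inner product linear in the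
first argument). -/
structure FunctionalHilbertSpace (H : Type*) [NormedAddCommGroup H]
    [InnerProductSpace ℂ H] [CompleteSpace H] where
  toFun : H →ₗ[ℂ] (ℂ → ℂ)
  holo : ∀ h : H, DifferentiableOn ℂ (toFun h) (Metric.ball (0 : ℂ) 1)
  sep : ∀ h₁ h₂ : H, Set.EqOn (toFun h₁) (toFun h₂) (Metric.ball (0 : ℂ) 1) → h₁ = h₂
  Mz : H →L[ℂ] H
  Mz_apply : ∀ h : H, ∀ z ∈ Metric.ball (0 : ℂ) 1, toFun (Mz h) z = z * toFun h z
  shift_mem : ∀ φ : ℂ → ℂ, DifferentiableOn ℂ φ (Metric.ball (0 : ℂ) 1) →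
    ((∃ h : H, Set.EqOn (toFun h) φ (Metric.ball (0 : ℂ) 1)) ↔
      (∃ h : H, Set.EqOn (toFun h) (fun z => z * φ z) (Metric.ball (0 : ℂ) 1)))
  one : H
  one_apply : ∀ z ∈ Metric.ball (0 : ℂ) 1, toFun one z = 1
  inner_one : ∀ h : H, ⟪one, h⟫_ℂ = toFun h 0

/-- The left spectrum of a bounded operator. -/
def leftSpectrum {H : Type*} [NormedAddCommGroup H] [InnerProductSpace ℂ H]
    (T : H →L[ℂ] H) : Set ℂ :=
  {l : ℂ | ¬ ∃ L : H →L[ℂ] H, L ∘L (T - l • (1 : H →L[ℂ] H)) = 1}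

set_option linter.unusedSectionVars false


section BB
variable {H : Type*} [NormedAddCommGroup H] [InnerProductSpace ℂ H] [CompleteSpace H]

/-- `A` is bounded below. -/
def IsBB (A : H →L[ℂ] H) : Prop := ∃ c : ℝ, 0 < c ∧ ∀ x : H, c * ‖x‖ ≤ ‖A x‖

lemma injective_of_apply (A : H →L[ℂ] H) (h : ∀ x, A x = 0 → x = 0) :
    Function.Injective A := fun a b hab =>
  sub_eq_zero.mp (h (a - b) (by rw [map_sub, hab, sub_self]))

lemma IsBB.injective {A : H →L[ℂ] H} (h : IsBB A) : Function.Injective A := by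
  obtain ⟨c, hc, hb⟩ := h
  refine injective_of_apply A fun x hx => ?_
  have := hb x
  rw [hx, norm_zero] at this
  have : ‖x‖ ≤ 0 := by nlinarith [norm_nonneg x]
  simpa [norm_le_zero_iff] using this

lemma IsBB.congr {A B : H →L[ℂ] H} (h : IsBB A) (hAB : ∀ x, ‖B x‖ = ‖A x‖) : IsBB B := by
  obtain ⟨c, hc, hb⟩ := h
  exact ⟨c, hc, fun x => by rw [hAB]; exact hb x⟩

lemma isBB_of_leftInv {A L : H →L[ℂ] H} (h : L ∘L A = 1) : IsBB A := by
  refine ⟨(‖L‖ + 1)⁻¹, by positivity, fun x => ?_⟩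
  have h1 : ‖x‖ = ‖L (A x)‖ := by
    have : L (A x) = x := by
      have := congrArg (fun T : H →L[ℂ] H => T x) h
      simpa using this
    rw [this]
  have h2 : ‖L (A x)‖ ≤ ‖L‖ * ‖A x‖ := L.le_opNorm _
  rw [inv_mul_le_iff₀ (by positivity)]
  nlinarith [norm_nonneg (A x), norm_nonneg L, h1, h2]

lemma isBB_of_isUnit {A : H →L[ℂ] H} (h : IsUnit A) : IsBB A := by
  obtain ⟨U, rfl⟩ := h
  have : ((U⁻¹ : (H →L[ℂ] H)ˣ) : H →L[ℂ] H) ∘L (U : H →L[ℂ] H) = 1 := by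
    ext x
    simp [← ContinuousLinearMap.mul_apply, ← Units.val_mul]
  exact isBB_of_leftInv this

lemma IsBB.isClosed_range {A : H →L[ℂ] H} (h : IsBB A) : IsClosed (Set.range A) := by
  obtain ⟨c, hc, hb⟩ := h
  have hanti : AntilipschitzWith (⟨c, hc.le⟩ : NNReal)⁻¹ A := by
    apply ContinuousLinearMap.antilipschitz_of_bound
    intro x
    change ‖x‖ ≤ c⁻¹ * ‖A x‖
    rw [inv_mul_eq_div, le_div_iff₀ hc]
    nlinarith [hb x]
  exact hanti.isClosed_range A.uniformContinuous

lemma IsBB.exists_leftInv {A : H →L[ℂ] H} (h : IsBB A) : ∃ L : H →L[ℂ] H, L ∘L A = 1 := by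
  set R : Submodule ℂ H := LinearMap.range (A : H →ₗ[ℂ] H) with hR
  have hRc : IsClosed (R : Set H) := by
    rw [hR]
    rw [LinearMap.coe_range]
    exact h.isClosed_range
  haveI : CompleteSpace R := hRc.completeSpace_coe
  set A' : H →L[ℂ] R := A.codRestrict R (fun x => LinearMap.mem_range_self _ x) with hA'
  have hker : LinearMap.ker (A' : H →ₗ[ℂ] R) = ⊥ := by
    rw [hA', ContinuousLinearMap.ker_codRestrict]
    exact LinearMap.ker_eq_bot.mpr h.injective
  have hrange : LinearMap.range (A' : H →ₗ[ℂ] R) = ⊤ := by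
    rw [Submodule.eq_top_iff']
    rintro ⟨y, x, rfl⟩
    exact ⟨x, Subtype.ext rfl⟩
  set E := ContinuousLinearEquiv.ofBijective A' hker hrange with hE
  refine ⟨(E.symm : R →L[ℂ] H) ∘L (Submodule.orthogonalProjection R), ?_⟩
  ext x
  have h1 : Submodule.orthogonalProjection R (A x) = A' x := by
    have : A x = ((A' x : R) : H) := rfl
    rw [this]
    exact Submodule.orthogonalProjection_mem_subspace_eq_self (A' x)
  have h2 : A' x = E x := by rw [hE, ContinuousLinearEquiv.coeFn_ofBijective]
  simp only [ContinuousLinearMap.comp_apply, ContinuousLinearMap.one_apply,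
    ContinuousLinearEquiv.coe_coe, h1, h2, ContinuousLinearEquiv.symm_apply_apply]

end BB

section BB2
variable {H : Type*} [NormedAddCommGroup H] [InnerProductSpace ℂ H] [CompleteSpace H]

lemma rankOne_apply (f g x : H) : rankOne f g x = ⟪g, x⟫_ℂ • f := by
  simp [rankOne]

lemma isBB_perturb {A B : H →L[ℂ] H} {f g : H}
    (hA : IsBB A) (hBinj : Function.Injective B)
    (hAB : ∀ x : H, B x = A x + ⟪g, x⟫_ℂ • f) : IsBB B := by
  obtain ⟨c, hc, hb⟩ := hA
  set R : Submodule ℂ H := LinearMap.range (A : H →ₗ[ℂ] H) with hRdef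
  have hRc : IsClosed (R : Set H) := by
    rw [hRdef, LinearMap.coe_range]
    exact IsBB.isClosed_range ⟨c, hc, hb⟩
  haveI : CompleteSpace R := hRc.completeSpace_coe
  by_cases hf : f ∈ R
  · -- f = A u
    obtain ⟨u, hu⟩ := hf
    set P : H →L[ℂ] H := 1 + rankOne u g with hPdef
    have hP : ∀ x, P x = x + ⟪g, x⟫_ℂ • u := fun x => by
      simp [hPdef, rankOne_apply]
    have hBP : ∀ x, B x = A (P x) := fun x => by
      rw [hP, map_add, map_smul, show A u = f from hu, hAB]
    have hPinj : Function.Injective P := fun a b hab => hBinj (by rw [hBP, hBP, hab])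
    set α : ℂ := 1 + ⟪g, u⟫_ℂ with hα
    have hα0 : α ≠ 0 := by
      intro h0
      have hPu : P u = 0 := by
        have hs : u + ⟪g, u⟫_ℂ • u = α • u := by rw [hα, add_smul, one_smul]
        rw [hP, hs, h0, zero_smul]
      have hu0 : u = 0 := hPinj (by rw [hPu, map_zero])
      rw [hα, hu0, inner_zero_right, add_zero] at h0
      exact one_ne_zero h0
    set Q : H →L[ℂ] H := 1 - α⁻¹ • rankOne u g with hQdef
    have hQP : ∀ x, Q (P x) = x := by
      intro x
      have h1 : ⟪g, P x⟫_ℂ = ⟪g, x⟫_ℂ * α := by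
        rw [hP, inner_add_right, inner_smul_right, hα]; ring
      have h2 : Q (P x) = P x - α⁻¹ • (⟪g, P x⟫_ℂ • u) := by
        simp [hQdef, rankOne_apply]
      have h3 : α⁻¹ * (⟪g, x⟫_ℂ * α) = ⟪g, x⟫_ℂ := by
        field_simp
      rw [h2, h1, hP, smul_smul, h3]
      abel
    refine ⟨c / (‖Q‖ + 1), by positivity, fun x => ?_⟩
    have h4 : ‖x‖ ≤ (‖Q‖ + 1) * ‖P x‖ := by
      calc ‖x‖ = ‖Q (P x)‖ := by rw [hQP]
      _ ≤ ‖Q‖ * ‖P x‖ := Q.le_opNorm _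
      _ ≤ (‖Q‖ + 1) * ‖P x‖ := by nlinarith [norm_nonneg (P x)]
    have h5 : c * ‖P x‖ ≤ ‖B x‖ := by rw [hBP]; exact hb _
    rw [div_mul_eq_mul_div, div_le_iff₀ (by positivity)]
    nlinarith [norm_nonneg (P x), norm_nonneg x, norm_nonneg Q]
  · -- f ∉ range A
    set f₁ : H := (Submodule.orthogonalProjection R f : H) with hf₁
    set f₂ : H := f - f₁ with hf₂def
    have hf₂mem : f₂ ∈ Rᗮ := Submodule.sub_starProjection_mem_orthogonal (K := R) f
    have hf₂0 : f₂ ≠ 0 := by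
      intro h0
      apply hf
      have : f = f₁ := by rw [← sub_eq_zero]; exact h0
      rw [this, hf₁]
      exact SetLike.coe_mem _
    have hd : 0 < ‖f₂‖ := norm_pos_iff.mpr hf₂0
    have key : ∀ x : H, ‖⟪g, x⟫_ℂ‖ * ‖f₂‖ ≤ ‖B x‖ := by
      intro x
      have hπA : Submodule.orthogonalProjection Rᗮ (A x) = 0 :=
        Submodule.orthogonalProjectionOnto_apply_of_mem_orthogonal
          (Submodule.le_orthogonal_orthogonal R (LinearMap.mem_range_self _ x))
      have hπf₁ : Submodule.orthogonalProjection Rᗮ f₁ = 0 :=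
        Submodule.orthogonalProjectionOnto_apply_of_mem_orthogonal
          (Submodule.le_orthogonal_orthogonal R (SetLike.coe_mem _))
      have hπf₂ : Submodule.orthogonalProjection Rᗮ f₂ = ⟨f₂, hf₂mem⟩ := by
        exact Submodule.orthogonalProjection_mem_subspace_eq_self (⟨f₂, hf₂mem⟩ : Rᗮ)
      have hπf : Submodule.orthogonalProjection Rᗮ f = ⟨f₂, hf₂mem⟩ := by
        have : f = f₁ + f₂ := by rw [hf₂def]; abel
        rw [this, map_add, hπf₁, hπf₂, zero_add]
      have hπB : Submodule.orthogonalProjection Rᗮ (B x) = ⟪g, x⟫_ℂ • (⟨f₂, hf₂mem⟩ : Rᗮ) := by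
        rw [hAB, map_add, map_smul, hπA, hπf, zero_add]
      have h6 : ‖Submodule.orthogonalProjection Rᗮ (B x)‖ = ‖⟪g, x⟫_ℂ‖ * ‖f₂‖ := by
        rw [hπB, norm_smul]
        congr 1
      have h7 : ‖Submodule.orthogonalProjection Rᗮ (B x)‖ ≤ ‖B x‖ := by
        calc ‖Submodule.orthogonalProjection Rᗮ (B x)‖ ≤ ‖Submodule.orthogonalProjection Rᗮ‖ * ‖B x‖ :=
          (Submodule.orthogonalProjection Rᗮ).le_opNorm _
        _ ≤ 1 * ‖B x‖ := by
            have := Submodule.orthogonalProjection_norm_le Rᗮ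
            nlinarith [norm_nonneg (B x)]
        _ = ‖B x‖ := one_mul _
      rw [← h6]; exact h7
    refine ⟨c * ‖f₂‖ / (‖f₂‖ + ‖f‖), by positivity, fun x => ?_⟩
    have h1 : c * ‖x‖ ≤ ‖A x‖ := hb x
    have h2 : ‖A x‖ ≤ ‖B x‖ + ‖⟪g, x⟫_ℂ‖ * ‖f‖ := by
      have : A x = B x - ⟪g, x⟫_ℂ • f := by rw [hAB]; abel
      rw [this]
      calc ‖B x - ⟪g, x⟫_ℂ • f‖ ≤ ‖B x‖ + ‖⟪g, x⟫_ℂ • f‖ := norm_sub_le _ _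
      _ = ‖B x‖ + ‖⟪g, x⟫_ℂ‖ * ‖f‖ := by rw [norm_smul]
    have h3 := key x
    rw [div_mul_eq_mul_div, div_le_iff₀ (by positivity)]
    nlinarith [mul_le_mul_of_nonneg_left h2 hd.le,
      mul_le_mul_of_nonneg_right h3 (norm_nonneg f),
      mul_le_mul_of_nonneg_left h1 hd.le, norm_nonneg x, norm_nonneg (B x)]

end BB2

section Ray
variable {H : Type*} [NormedAddCommGroup H] [InnerProductSpace ℂ H] [CompleteSpace H]

set_option maxHeartbeats 1000000 in
lemma notMem_spectrum_of_ray [Nontrivial H] (A : H →L[ℂ] H) (l : ℂ) (hl : l ≠ 0)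
    (hb : ∀ t : ℝ, 1 ≤ t → IsBB (A - ((t : ℂ) * l) • 1)) : l ∉ spectrum ℂ A := by
  intro hmem
  have hlpos : 0 < ‖l‖ := norm_pos_iff.mpr hl
  set S : Set ℝ := Set.Ici 1 ∩ (fun t : ℝ => (t : ℂ) * l) ⁻¹' (spectrum ℂ A) with hS
  have h1S : (1 : ℝ) ∈ S := by
    rw [hS]
    exact ⟨Set.self_mem_Ici, by simpa [Set.mem_preimage] using hmem⟩
  have hnorm_tl : ∀ t : ℝ, 1 ≤ t → ‖(t : ℂ) * l‖ = t * ‖l‖ := by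
    intro t ht
    rw [norm_mul, Complex.norm_real, Real.norm_eq_abs, abs_of_nonneg (by linarith)]
  have hSb : BddAbove S := by
    refine ⟨‖A‖ / ‖l‖, fun t ht => ?_⟩
    have h2 := spectrum.norm_le_norm_of_mem ht.2
    rw [hnorm_tl t ht.1] at h2
    exact (le_div_iff₀ hlpos).mpr h2
  have hScl : IsClosed S :=
    isClosed_Ici.inter ((spectrum.isClosed A).preimage
      (Complex.continuous_ofReal.mul continuous_const))
  set t₀ := sSup S with ht₀def
  have ht₀S : t₀ ∈ S := hScl.csSup_mem ⟨1, h1S⟩ hSb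
  obtain ⟨c, hc, hcb⟩ := hb t₀ ht₀S.1
  set δ : ℝ := c / (4 * (‖l‖ + 1)) with hδdef
  have hδpos : 0 < δ := by positivity
  have hδl : δ * ‖l‖ ≤ c / 4 := by
    rw [hδdef, div_mul_eq_mul_div, div_le_div_iff₀ (by positivity) (by norm_num)]
    nlinarith
  set t₁ : ℝ := t₀ + δ with ht₁def
  have ht₁ : t₁ ∉ S := fun h => absurd (le_csSup hSb h) (by rw [ht₁def]; push_neg; linarith)
  have ht₁1 : (1 : ℝ) ≤ t₁ := le_trans ht₀S.1 (by linarith)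
  have hsp : ((t₁ : ℂ) * l) ∉ spectrum ℂ A := fun h => ht₁ ⟨ht₁1, h⟩
  rw [spectrum.notMem_iff, Algebra.algebraMap_eq_smul_one] at hsp
  obtain ⟨U, hU⟩ := hsp
  haveI : Nontrivial (H →L[ℂ] H) := ⟨1, 0, fun h => by
    obtain ⟨x0, hx0⟩ := exists_ne (0 : H)
    exact hx0 (by simpa using congrArg (fun T : H →L[ℂ] H => T x0) h)⟩
  -- U is bounded below by c/2
  have hub : ∀ x : H, c / 2 * ‖x‖ ≤ ‖(U : H →L[ℂ] H) x‖ := by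
    intro x
    have hy : (A - ((t₀ : ℂ) * l) • 1) x = ((δ : ℂ) * l) • x - (U : H →L[ℂ] H) x := by
      rw [hU]
      simp only [ContinuousLinearMap.sub_apply, ContinuousLinearMap.smul_apply,
        ContinuousLinearMap.one_apply]
      have : ((t₁ : ℂ) * l) • x = ((t₀ : ℂ) * l) • x + ((δ : ℂ) * l) • x := by
        rw [← add_smul]
        congr 1
        rw [ht₁def]
        push_cast
        ring
      rw [this]
      abel
    have h1 : c * ‖x‖ ≤ ‖(A - ((t₀ : ℂ) * l) • 1) x‖ := hcb x
    have h2 : ‖(A - ((t₀ : ℂ) * l) • 1) x‖ ≤ ‖((δ : ℂ) * l) • x‖ + ‖(U : H →L[ℂ] H) x‖ := by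
      rw [hy]; exact norm_sub_le _ _
    have h3 : ‖((δ : ℂ) * l) • x‖ ≤ c / 4 * ‖x‖ := by
      rw [norm_smul, norm_mul, Complex.norm_real, Real.norm_eq_abs, abs_of_nonneg hδpos.le]
      nlinarith [norm_nonneg x]
    nlinarith [norm_nonneg x]
  set v : H →L[ℂ] H := ((U⁻¹ : (H →L[ℂ] H)ˣ) : H →L[ℂ] H) with hvdef
  have hvb : ‖v‖ ≤ 2 / c := by
    apply ContinuousLinearMap.opNorm_le_bound _ (by positivity)
    intro y
    have h3 : (U : H →L[ℂ] H) (v y) = y := by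
      have hm : (U : H →L[ℂ] H) * v = 1 := by rw [hvdef]; exact U.mul_inv
      calc (U : H →L[ℂ] H) (v y) = ((U : H →L[ℂ] H) * v) y := rfl
      _ = y := by rw [hm]; rfl
    have h4 := hub (v y)
    rw [h3] at h4
    rw [div_mul_eq_mul_div, le_div_iff₀ hc]
    nlinarith
  have hvpos : 0 < ‖v‖ := Units.norm_pos U⁻¹
  -- conclude (t₀ l) ∉ spectrum, contradiction
  have hnear : ‖(((t₀ : ℂ) * l) • 1 - A) - (U : H →L[ℂ] H)‖ < ‖v‖⁻¹ := by
    have heq : (((t₀ : ℂ) * l) • 1 - A) - (U : H →L[ℂ] H) = (-((δ : ℂ) * l)) • (1 : H →L[ℂ] H) := by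
      rw [hU]
      have : (t₀ : ℂ) * l - (t₁ : ℂ) * l = -((δ : ℂ) * l) := by
        rw [ht₁def]; push_cast; ring
      rw [← this, sub_smul]
      abel
    rw [heq, norm_smul, norm_one, mul_one, norm_neg, norm_mul, Complex.norm_real,
      Real.norm_eq_abs, abs_of_nonneg hδpos.le]
    have h5 : δ * ‖l‖ * ‖v‖ ≤ c / 4 * (2 / c) :=
      mul_le_mul hδl hvb (norm_nonneg v) (by positivity)
    have h6 : c / 4 * (2 / c) = 1 / 2 := by field_simp; ring
    rw [← one_div, lt_div_iff₀ hvpos]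
    linarith [h5, h6 ▸ h5]
  have hcontr : IsUnit ((((t₀ : ℂ) * l) • 1 : H →L[ℂ] H) - A) := (U.ofNearby _ hnear).isUnit
  rw [← Algebra.algebraMap_eq_smul_one] at hcontr
  exact (spectrum.notMem_iff.mpr hcontr) ht₀S.2

end Ray

section FHS
variable {H : Type*} [NormedAddCommGroup H] [InnerProductSpace ℂ H] [CompleteSpace H]
  (e : FunctionalHilbertSpace H)

open Filter Topology

/-- If `(z - l) · h(z) = 0` on the disc then `h = 0`. -/
lemma FunctionalHilbertSpace.eq_zero_of_mul (h : H) (l : ℂ)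
    (hz : ∀ z ∈ Metric.ball (0 : ℂ) 1, (z - l) * e.toFun h z = 0) : h = 0 := by
  apply e.sep h 0
  intro z hzb
  have h0 : e.toFun (0 : H) z = 0 := by rw [map_zero]; rfl
  rw [h0]
  by_cases hzl : z = l
  · subst hzl
    have hco : ContinuousAt (e.toFun h) z :=
      (e.holo h).continuousOn.continuousAt (Metric.isOpen_ball.mem_nhds hzb)
    have h1 : Tendsto (e.toFun h) (𝓝[≠] z) (𝓝 (e.toFun h z)) :=
      hco.continuousWithinAt.tendsto
    have hev : ∀ᶠ w in 𝓝[≠] z, e.toFun h w = 0 := by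
      filter_upwards [mem_nhdsWithin_of_mem_nhds (Metric.isOpen_ball.mem_nhds hzb),
        self_mem_nhdsWithin] with w hw hw'
      have h2 := hz w hw
      have h3 : w - z ≠ 0 := sub_ne_zero.mpr hw'
      exact (mul_eq_zero.mp h2).resolve_left h3
    have h4 : Tendsto (e.toFun h) (𝓝[≠] z) (𝓝 0) :=
      Tendsto.congr' (Filter.EventuallyEq.symm hev) tendsto_const_nhds
    exact tendsto_nhds_unique h1 h4
  · have h2 := hz z hzb
    exact (mul_eq_zero.mp h2).resolve_left (sub_ne_zero.mpr hzl)

lemma FunctionalHilbertSpace.Mz_sub_injective (l : ℂ) :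
    Function.Injective (e.Mz - l • (1 : H →L[ℂ] H)) := by
  apply injective_of_apply
  intro x hx
  apply e.eq_zero_of_mul x l
  intro z hzb
  have h0 : e.Mz x - l • x = 0 := by
    simpa [ContinuousLinearMap.sub_apply, ContinuousLinearMap.smul_apply,
      ContinuousLinearMap.one_apply] using hx
  have h1 : e.toFun (e.Mz x) z - l * e.toFun x z = 0 := by
    have := congrArg (fun y => e.toFun y z) h0
    simpa [map_sub, map_smul, Pi.sub_apply, Pi.smul_apply, smul_eq_mul] using this
  calc (z - l) * e.toFun x z = z * e.toFun x z - l * e.toFun x z := by ring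
  _ = e.toFun (e.Mz x) z - l * e.toFun x z := by rw [e.Mz_apply x z hzb]
  _ = 0 := h1

lemma FunctionalHilbertSpace.T_apply (f x : H) {z : ℂ} (hzb : z ∈ Metric.ball (0 : ℂ) 1) :
    e.toFun ((e.Mz + rankOne f e.one) x) z
      = z * e.toFun x z + e.toFun x 0 * e.toFun f z := by
  have h0 : (e.Mz + rankOne f e.one) x = e.Mz x + ⟪e.one, x⟫_ℂ • f := by
    rw [ContinuousLinearMap.add_apply, rankOne_apply]
  rw [h0]
  have h1 := congrArg (fun y => y z) (map_add e.toFun (e.Mz x) (⟪e.one, x⟫_ℂ • f))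
  beta_reduce at h1
  rw [h1, Pi.add_apply]
  have h2 := congrArg (fun y => y z) (map_smul e.toFun ⟪e.one, x⟫_ℂ f)
  beta_reduce at h2
  rw [h2, Pi.smul_apply, smul_eq_mul, e.Mz_apply x z hzb, e.inner_one]

lemma FunctionalHilbertSpace.T_injective (f : H) (hf0 : e.toFun f 0 ≠ 0) :
    Function.Injective (e.Mz + rankOne f e.one) := by
  apply injective_of_apply
  intro x hx
  have hz0 : (0 : ℂ) ∈ Metric.ball (0 : ℂ) 1 := Metric.mem_ball_self one_pos
  have hTz : ∀ z ∈ Metric.ball (0 : ℂ) 1,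
      z * e.toFun x z + e.toFun x 0 * e.toFun f z = 0 := by
    intro z hzb
    rw [← e.T_apply f x hzb, hx, map_zero]
    rfl
  have hx0 : e.toFun x 0 = 0 := by
    have := hTz 0 hz0
    rw [zero_mul, zero_add] at this
    exact (mul_eq_zero.mp this).resolve_right hf0
  apply e.eq_zero_of_mul x 0
  intro z hzb
  have := hTz z hzb
  rw [hx0, zero_mul, add_zero] at this
  rw [sub_zero]
  exact this

end FHS

theorem left_spectrum_of_analytic_rankOne_perturbation
    {H : Type*} [NormedAddCommGroup H] [InnerProductSpace ℂ H] [CompleteSpace H]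
    (e : FunctionalHilbertSpace H)
    (hlinv : ∃ L : H →L[ℂ] H, L ∘L e.Mz = 1)
    (hcyc : ∃ ξ : H, Dense (Submodule.span ℂ (Set.range fun n : ℕ => (e.Mz ^ n) ξ) : Set H))
    (f : H)
    (hana : (⋂ n : ℕ, Set.range ⇑((e.Mz + rankOne f e.one) ^ n)) = {0})
    (hf0 : e.toFun f 0 ≠ 0) :
    leftSpectrum (e.Mz + rankOne f e.one) = leftSpectrum e.Mz ∧
      spectralRadius ℂ (e.Mz + rankOne f e.one) = spectralRadius ℂ e.Mz := by
  classical
  set T : H →L[ℂ] H := e.Mz + rankOne f e.one with hTdef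
  haveI : Nontrivial H := by
    refine ⟨e.one, 0, fun h1 => ?_⟩
    have h2 := e.one_apply 0 (Metric.mem_ball_self one_pos)
    rw [h1, map_zero] at h2
    exact one_ne_zero h2.symm
  -- injectivity of T - l for every l
  have hTinj : ∀ l : ℂ, Function.Injective (T - l • (1 : H →L[ℂ] H)) := by
    intro l
    by_cases hl : l = 0
    · subst hl
      rw [zero_smul, sub_zero]
      exact e.T_injective f hf0
    · apply injective_of_apply
      intro x hx
      have hTx : T x = l • x := by
        have h3 : T x - l • x = 0 := by
          simpa [ContinuousLinearMap.sub_apply, ContinuousLinearMap.smul_apply,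
            ContinuousLinearMap.one_apply] using hx
        rw [← sub_eq_zero]
        exact h3
      have hpow : ∀ n : ℕ, (T ^ n) x = l ^ n • x := by
        intro n
        induction n with
        | zero => simp
        | succ n ih =>
          rw [pow_succ, ContinuousLinearMap.mul_apply, hTx, map_smul, ih, smul_smul]
          congr 1
          ring
      have hmem : x ∈ ⋂ n : ℕ, Set.range ⇑(T ^ n) := by
        refine Set.mem_iInter.mpr fun n => ⟨(l ^ n)⁻¹ • x, ?_⟩
        rw [map_smul, hpow, smul_smul, inv_mul_cancel₀ (pow_ne_zero n hl), one_smul]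
      rw [hTdef] at hmem
      rw [hana] at hmem
      exact hmem
  -- the bounded-below equivalence
  have hBB : ∀ l : ℂ,
      (IsBB (T - l • (1 : H →L[ℂ] H)) ↔ IsBB (e.Mz - l • (1 : H →L[ℂ] H))) := by
    intro l
    constructor
    · intro h
      refine isBB_perturb (f := -f) (g := e.one) h (e.Mz_sub_injective l) fun x => ?_
      show (e.Mz - l • (1 : H →L[ℂ] H)) x = (T - l • (1 : H →L[ℂ] H)) x + ⟪e.one, x⟫_ℂ • (-f)
      simp only [ContinuousLinearMap.sub_apply, ContinuousLinearMap.smul_apply,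
        ContinuousLinearMap.one_apply, hTdef, ContinuousLinearMap.add_apply,
        rankOne_apply, smul_neg]
      abel
    · intro h
      refine isBB_perturb (f := f) (g := e.one) h (hTinj l) fun x => ?_
      show (T - l • (1 : H →L[ℂ] H)) x = (e.Mz - l • (1 : H →L[ℂ] H)) x + ⟪e.one, x⟫_ℂ • f
      simp only [ContinuousLinearMap.sub_apply, ContinuousLinearMap.smul_apply,
        ContinuousLinearMap.one_apply, hTdef, ContinuousLinearMap.add_apply,
        rankOne_apply]
      abel
  constructor
  · -- left spectrum equality
    ext l
    simp only [leftSpectrum, Set.mem_setOf_eq]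
    apply not_congr
    constructor
    · rintro ⟨L, hL⟩
      exact IsBB.exists_leftInv ((hBB l).mp (isBB_of_leftInv hL))
    · rintro ⟨L, hL⟩
      exact IsBB.exists_leftInv ((hBB l).mpr (isBB_of_leftInv hL))
  · -- spectral radius equality
    have hstep : ∀ (A B : H →L[ℂ] H),
        (∀ l : ℂ, IsBB (A - l • 1) → IsBB (B - l • 1)) →
        ∀ l ∈ spectrum ℂ B, (‖l‖₊ : ENNReal) ≤ spectralRadius ℂ A := by
      intro A B himp l hl
      by_contra hgt
      push_neg at hgt
      have hl0 : l ≠ 0 := by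
        rintro rfl
        simp only [nnnorm_zero, ENNReal.coe_zero] at hgt
        exact (not_lt_of_ge zero_le) hgt
      refine notMem_spectrum_of_ray B l hl0 ?_ hl
      intro t ht
      have hnn : (‖l‖₊ : ENNReal) ≤ (‖(t : ℂ) * l‖₊ : ENNReal) := by
        have h1 : ‖l‖ ≤ ‖(t : ℂ) * l‖ := by
          rw [norm_mul, Complex.norm_real, Real.norm_eq_abs, abs_of_nonneg (by linarith)]
          nlinarith [norm_nonneg l]
        exact_mod_cast h1
      have hres : ((t : ℂ) * l) ∈ resolventSet ℂ A :=
        spectrum.mem_resolventSet_of_spectralRadius_lt (lt_of_lt_of_le hgt hnn)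
      have hunit : IsUnit ((((t : ℂ) * l) • 1 : H →L[ℂ] H) - A) := by
        rw [← Algebra.algebraMap_eq_smul_one]
        exact hres
      have hABB : IsBB (A - ((t : ℂ) * l) • (1 : H →L[ℂ] H)) := by
        refine (isBB_of_isUnit hunit).congr fun x => ?_
        have h2 : (A - ((t : ℂ) * l) • (1 : H →L[ℂ] H)) x
            = -(((((t : ℂ) * l) • 1 : H →L[ℂ] H) - A) x) := by
          simp only [ContinuousLinearMap.sub_apply, ContinuousLinearMap.smul_apply,
            ContinuousLinearMap.one_apply]
          abel
        rw [h2, norm_neg]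
      exact himp _ hABB
    have key1 : ∀ l ∈ spectrum ℂ T, (‖l‖₊ : ENNReal) ≤ spectralRadius ℂ e.Mz :=
      hstep e.Mz T (fun l h => (hBB l).mpr h)
    have key2 : ∀ l ∈ spectrum ℂ e.Mz, (‖l‖₊ : ENNReal) ≤ spectralRadius ℂ T :=
      hstep T e.Mz (fun l h => (hBB l).mp h)
    apply le_antisymm
    · exact iSup₂_le key1
    · exact iSup₂_le key2
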